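/- arXiv:2101.00252 — 4 statements merged into one kernel-verified Lean document; each statement's English description precedes it below -/
import Mathlib

section
/- Let D ∈ ℕ, n ≥ D, and let λ, μ be Young diagrams with ℓ(λ) ≤ n−1 and μ ⊂^D λ (μ related to λ by a chain of D horizontal strips). Set m = n − D. Then the number of semistandard skew tableaux of shape λ/μ with entries in {m+1, …, n} is at most (∏_{i=1}^{n−1} (x_i(λ) + 1))^{2^D}, where x_i(λ) = λ_i − λ_{i+1}. -/
/-- `ν ⊂¹ ν'` : `ν ⊆ ν'` and the skew diagram `ν'/ν` is a horizontal strip, i.e.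
no two of its boxes lie in the same column. -/
def IsHorizontalStrip (ν ν' : YoungDiagram) : Prop :=
  ν ≤ ν' ∧ ∀ j, ν'.colLen j ≤ ν.colLen j + 1

/-- `μ ⊂^D λ` : there is a chain of `D` successive horizontal strips from `μ` up to `λ`. -/
def HStripChain (D : ℕ) (μ lam : YoungDiagram) : Prop :=
  ∃ c : ℕ → YoungDiagram, c D = μ ∧ c 0 = lam ∧
    ∀ i, i < D → IsHorizontalStrip (c (i + 1)) (c i)

/-- The set of semistandard skew tableaux of shape `λ/μ` with entries in `{m+1,…,m+D}`,
encoded (via the standard bijection) as increasing chains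
`μ = c 0 ⊂¹ c 1 ⊂¹ ⋯ ⊂¹ c D = λ` of horizontal strips, where the boxes of
`c (i+1) / c i` are exactly those holding the entry `m+i+1`. -/
def skewSSYTChains (D : ℕ) (μ lam : YoungDiagram) : Set (ℕ → YoungDiagram) :=
  {c | c 0 = μ ∧ (∀ i, i < D → IsHorizontalStrip (c i) (c (i + 1))) ∧
       ∀ i, D ≤ i → c i = lam}

/-- `x_i(λ) = λ_i - λ_{i+1}`, with `λ_i = λ.rowLen (i-1)` (1-indexed rows). -/
def xCoord (lam : YoungDiagram) (i : ℕ) : ℕ := lam.rowLen (i - 1) - lam.rowLen i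

/-!
Write `Q(λ) = ∏_{i<N} (λ_i - λ_{i+1} + 1)` where `λ` has at most `N` rows. A horizontal strip
`ν ⊂¹ λ` is determined by its rows, which interlace `λ_{i+1} ≤ ν_i ≤ λ_i`; hence there are at most
`Q(λ)` of them, and `ν_i - ν_{i+1} ≤ (λ_i - λ_{i+1}) + (λ_{i+1} - λ_{i+2})` gives `Q(ν) ≤ Q(λ)²`.
Sorting the chains of length `D + 1` by their penultimate shape `ν` and inducting on `D` bounds
their number by `Q(λ) · (Q(λ)²)^(2^D - 1) = Q(λ)^(2^(D+1) - 1)`.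
-/

namespace YoungDiagram

variable {μ ν : YoungDiagram}

theorem rowLen_mono (h : μ ≤ ν) (i : ℕ) : μ.rowLen i ≤ ν.rowLen i := by
  by_contra! hlt
  have := mem_iff_lt_rowLen.mp (h (mem_iff_lt_rowLen.mpr hlt))
  omega

theorem colLen_mono (h : μ ≤ ν) (j : ℕ) : μ.colLen j ≤ ν.colLen j := by
  by_contra! hlt
  have := mem_iff_lt_colLen.mp (h (mem_iff_lt_colLen.mpr hlt))
  omega

theorem rowLen_eq_zero_of_colLen_le {i : ℕ} (h : μ.colLen 0 ≤ i) : μ.rowLen i = 0 := by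
  by_contra hne
  have := mem_iff_lt_colLen.mp (mem_iff_lt_rowLen.mpr (Nat.pos_of_ne_zero hne))
  omega

theorem ext_rowLen (h : ∀ i, μ.rowLen i = ν.rowLen i) : μ = ν := by
  ext ⟨i, j⟩
  simp only [mem_cells, mem_iff_lt_rowLen, h]

end YoungDiagram

open YoungDiagram

theorem IsHorizontalStrip.rowLen_succ_le {ν lam : YoungDiagram} (h : IsHorizontalStrip ν lam)
    (i : ℕ) : lam.rowLen (i + 1) ≤ ν.rowLen i := by
  by_contra! hlt
  have hcol := mem_iff_lt_colLen.mp (mem_iff_lt_rowLen.mpr hlt)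
  have hν : (i, ν.rowLen i) ∈ ν := mem_iff_lt_colLen.mpr (by have := h.2 (ν.rowLen i); omega)
  exact (mem_iff_lt_rowLen.mp hν).false

def rowGapProd (N : ℕ) (lam : YoungDiagram) : ℕ :=
  ∏ i ∈ Finset.range N, (lam.rowLen i - lam.rowLen (i + 1) + 1)

theorem prod_Icc_xCoord_eq_rowGapProd (N : ℕ) (lam : YoungDiagram) :
    ∏ i ∈ Finset.Icc 1 N, (xCoord lam i + 1) = rowGapProd N lam := by
  rw [← Finset.Ico_add_one_right_eq_Icc, Finset.prod_Ico_eq_prod_range, rowGapProd,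
    Nat.add_sub_cancel]
  refine Finset.prod_congr rfl fun i _ => ?_
  rw [xCoord, Nat.add_sub_cancel_left, Nat.add_comm 1 i]

theorem rowGapProd_succ_le {N : ℕ} {lam : YoungDiagram} (hlam : lam.colLen 0 ≤ N) :
    ∏ i ∈ Finset.range N, (lam.rowLen (i + 1) - lam.rowLen (i + 2) + 1) ≤ rowGapProd N lam := by
  set gap : ℕ → ℕ := fun i => lam.rowLen i - lam.rowLen (i + 1) + 1
  have gap_N : gap N = 1 := by simp [gap, rowLen_eq_zero_of_colLen_le hlam]
  calc ∏ i ∈ Finset.range N, gap (i + 1)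
      ≤ (∏ i ∈ Finset.range N, gap (i + 1)) * gap 0 := Nat.le_mul_of_pos_right _ (Nat.succ_pos _)
    _ = (∏ i ∈ Finset.range N, gap i) * gap N := by
      rw [← Finset.prod_range_succ', Finset.prod_range_succ]
    _ = rowGapProd N lam := by rw [gap_N, mul_one, rowGapProd]

theorem IsHorizontalStrip.rowGapProd_le_sq {N : ℕ} {ν lam : YoungDiagram}
    (h : IsHorizontalStrip ν lam) (hlam : lam.colLen 0 ≤ N) :
    rowGapProd N ν ≤ rowGapProd N lam ^ 2 := by
  have gap_le : ∀ i, ν.rowLen i - ν.rowLen (i + 1) + 1 ≤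
      (lam.rowLen i - lam.rowLen (i + 1) + 1) * (lam.rowLen (i + 1) - lam.rowLen (i + 2) + 1) := by
    intro i
    have := rowLen_mono h.1 i
    have : lam.rowLen (i + 2) ≤ ν.rowLen (i + 1) := h.rowLen_succ_le (i + 1)
    have := lam.rowLen_anti i (i + 1) i.le_succ
    have := lam.rowLen_anti (i + 1) (i + 2) (i + 1).le_succ
    calc ν.rowLen i - ν.rowLen (i + 1) + 1
        ≤ (lam.rowLen i - lam.rowLen (i + 1)) + (lam.rowLen (i + 1) - lam.rowLen (i + 2)) + 1 := by
          omega
      _ ≤ _ := by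
          generalize lam.rowLen i - lam.rowLen (i + 1) = p
          generalize lam.rowLen (i + 1) - lam.rowLen (i + 2) = q
          nlinarith
  calc rowGapProd N ν
      ≤ ∏ i ∈ Finset.range N, ((lam.rowLen i - lam.rowLen (i + 1) + 1) *
          (lam.rowLen (i + 1) - lam.rowLen (i + 2) + 1)) :=
        Finset.prod_le_prod' fun i _ => gap_le i
    _ = rowGapProd N lam * ∏ i ∈ Finset.range N, (lam.rowLen (i + 1) - lam.rowLen (i + 2) + 1) :=
        Finset.prod_mul_distrib
    _ ≤ rowGapProd N lam ^ 2 := by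
      rw [sq]
      exact Nat.mul_le_mul_left _ (rowGapProd_succ_le hlam)

theorem encard_setOf_isHorizontalStrip_le {N : ℕ} {lam : YoungDiagram} (hlam : lam.colLen 0 ≤ N) :
    {ν | IsHorizontalStrip ν lam}.encard ≤ rowGapProd N lam := by
  let box : Finset (Fin N → ℕ) :=
    Fintype.piFinset fun i => Finset.Icc (lam.rowLen (i + 1)) (lam.rowLen i)
  let rows : YoungDiagram → Fin N → ℕ := fun ν i => ν.rowLen i
  have maps : Set.MapsTo rows {ν | IsHorizontalStrip ν lam} box := fun ν hν => by
    simp only [box, Finset.mem_coe, Fintype.mem_piFinset, Finset.mem_Icc]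
    exact fun i => ⟨hν.rowLen_succ_le i, rowLen_mono hν.1 i⟩
  have inj : Set.InjOn rows {ν | IsHorizontalStrip ν lam} := by
    intro ν₁ h₁ ν₂ h₂ heq
    refine ext_rowLen fun i => ?_
    by_cases hi : i < N
    · exact congrFun heq ⟨i, hi⟩
    · have short : ∀ ν, IsHorizontalStrip ν lam → ν.rowLen i = 0 := fun ν hν =>
        rowLen_eq_zero_of_colLen_le ((colLen_mono hν.1 0).trans (hlam.trans (not_lt.mp hi)))
      rw [short ν₁ h₁, short ν₂ h₂]
  calc {ν | IsHorizontalStrip ν lam}.encard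
      ≤ (box : Set (Fin N → ℕ)).encard := Set.encard_le_encard_of_injOn maps inj
    _ = ∏ i : Fin N, (lam.rowLen i - lam.rowLen (i + 1) + 1 : ℕ) := by
      rw [Set.encard_coe_eq_coe_finsetCard, Fintype.card_piFinset]
      refine congrArg _ (Finset.prod_congr rfl fun i _ => ?_)
      have := lam.rowLen_anti i (i + 1) (Nat.le_succ i)
      rw [Nat.card_Icc]
      omega
    _ = rowGapProd N lam := by
      rw [rowGapProd, Fin.prod_univ_eq_prod_range (fun i => lam.rowLen i - lam.rowLen (i + 1) + 1)]

theorem Set.encard_le_encard_mul_of_fiber_le {α β : Type*} {s : Set α} {t : Set β} {f : α → β}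
    (ht : t.Finite) (hf : Set.MapsTo f s t) {M : ℕ∞}
    (hM : ∀ b ∈ t, {a ∈ s | f a = b}.encard ≤ M) : s.encard ≤ t.encard * M :=
  calc s.encard ≤ (⋃ b ∈ ht.toFinset, {a ∈ s | f a = b}).encard :=
        Set.encard_le_encard fun a ha => Set.mem_biUnion (by simpa using hf ha) ⟨ha, rfl⟩
    _ ≤ ∑ b ∈ ht.toFinset, {a ∈ s | f a = b}.encard := Finset.set_encard_biUnion_le _ _
    _ ≤ ∑ _b ∈ ht.toFinset, M := Finset.sum_le_sum fun b hb => hM b (by simpa using hb)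
    _ = t.encard * M := by rw [Finset.sum_const, nsmul_eq_mul, ht.encard_eq_coe_toFinset_card]

section skewSSYTChains

variable {D : ℕ} {μ lam : YoungDiagram}

theorem skewSSYTChains_zero_subset : skewSSYTChains 0 μ lam ⊆ {fun _ => lam} :=
  fun _ hc => funext fun i => hc.2.2 i (Nat.zero_le i)

theorem mapsTo_skewSSYTChains_succ :
    Set.MapsTo (· D) (skewSSYTChains (D + 1) μ lam) {ν | IsHorizontalStrip ν lam} :=
  fun _ hc => hc.2.2 (D + 1) le_rfl ▸ hc.2.1 D D.lt_succ_self

/-- The truncation `c ↦ c ∘ (min · D)` is injective on this fiber. -/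
theorem encard_skewSSYTChains_succ_fiber_le (ν : YoungDiagram) :
    {c ∈ skewSSYTChains (D + 1) μ lam | c D = ν}.encard ≤ (skewSSYTChains D μ ν).encard := by
  refine Set.encard_le_encard_of_injOn (f := fun c i => c (min i D)) ?_ ?_
  · rintro c ⟨⟨c_zero, c_strip, -⟩, rfl⟩
    refine ⟨by simpa using c_zero, fun i hi => ?_, fun i hi => by simp [hi]⟩
    simpa [hi.le, Nat.min_eq_left (Nat.succ_le_of_lt hi)] using c_strip i (hi.trans D.lt_succ_self)
  · rintro c₁ ⟨⟨-, -, c₁_top⟩, -⟩ c₂ ⟨⟨-, -, c₂_top⟩, -⟩ heq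
    funext i
    rcases le_or_gt i D with hi | hi
    · simpa [hi] using congrFun heq i
    · rw [c₁_top i hi, c₂_top i hi]

theorem encard_skewSSYTChains_le {N : ℕ} (hlam : lam.colLen 0 ≤ N) :
    (skewSSYTChains D μ lam).encard ≤ (rowGapProd N lam ^ (2 ^ D - 1) : ℕ) := by
  induction D generalizing lam with
  | zero => simpa using Set.encard_le_encard skewSSYTChains_zero_subset
  | succ D ih =>
    have strips := encard_setOf_isHorizontalStrip_le hlam
    have fiber_le : ∀ ν ∈ {ν | IsHorizontalStrip ν lam},
        {c ∈ skewSSYTChains (D + 1) μ lam | c D = ν}.encard ≤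
          ((rowGapProd N lam ^ 2) ^ (2 ^ D - 1) : ℕ) := fun ν hν =>
      (encard_skewSSYTChains_succ_fiber_le ν).trans <|
        (ih ((colLen_mono hν.1 0).trans hlam)).trans <|
          Nat.cast_le.mpr (Nat.pow_le_pow_left (hν.rowGapProd_le_sq hlam) _)
    calc (skewSSYTChains (D + 1) μ lam).encard
        ≤ {ν | IsHorizontalStrip ν lam}.encard * ((rowGapProd N lam ^ 2) ^ (2 ^ D - 1) : ℕ) :=
          Set.encard_le_encard_mul_of_fiber_le (Set.finite_of_encard_le_coe strips)
            mapsTo_skewSSYTChains_succ fiber_le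
      _ ≤ (rowGapProd N lam * (rowGapProd N lam ^ 2) ^ (2 ^ D - 1) : ℕ) := by
          push_cast
          exact mul_le_mul_left strips _
      _ = (rowGapProd N lam ^ (2 ^ (D + 1) - 1) : ℕ) := by
          rw [← pow_mul, ← pow_succ', pow_succ 2 D]
          have := Nat.one_le_two_pow (n := D)
          congr 2
          omega

end skewSSYTChains

theorem card_skewSSYT_le_general (D n : ℕ) (lam μ : YoungDiagram)
    (hlam : lam.colLen 0 ≤ n - 1) :
    (skewSSYTChains D μ lam).ncard ≤
      (∏ i ∈ Finset.Icc 1 (n - 1), (xCoord lam i + 1)) ^ (2 ^ D) := by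
  rw [prod_Icc_xCoord_eq_rowGapProd]
  calc (skewSSYTChains D μ lam).ncard ≤ rowGapProd (n - 1) lam ^ (2 ^ D - 1) :=
        ENat.toNat_le_of_le_natCast (encard_skewSSYTChains_le hlam)
    _ ≤ rowGapProd (n - 1) lam ^ 2 ^ D :=
        Nat.pow_le_pow_right (Finset.one_le_prod' fun _ _ => Nat.le_add_left 1 _) (Nat.sub_le _ _)

/-- If `ℓ(λ) ≤ n-1`, `μ ⊂^D λ` and `m = n - D` (with `n ≥ D`), the number of semistandard
skew tableaux of shape `λ/μ` with entries in `{m+1,…,n}` is at most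
`(∏_{i=1}^{n-1} (x_i(λ)+1))^(2^D)`. -/
theorem card_skewSSYT_le (D n : ℕ) (hn : D ≤ n) (lam μ : YoungDiagram)
    (hlam : lam.colLen 0 ≤ n - 1) (hchain : HStripChain D μ lam) :
    (skewSSYTChains D μ lam).ncard ≤
      (∏ i ∈ Finset.Icc 1 (n - 1), (xCoord lam i + 1)) ^ (2 ^ D) :=
  card_skewSSYT_le_general D n lam μ hlam
end

section
/- Fix partitions μ of k and ν of ℓ. For each n ≥ ℓ(μ) + ℓ(ν), let W_n^{[μ,ν]} be the irreducible representation of U(n) with highest weight (signature) (μ_1, …, μ_{ℓ(μ)}, 0, …, 0, −ν_{ℓ(ν)}, …, −ν_1). Then there is a polynomial P ∈ ℚ[t] such that dim W_n^{[μ,ν]} = P(n) for all n ≥ ℓ(μ) + ℓ(ν), and dim W_n^{[μ,ν]} ≍ n^{k+ℓ} as n → ∞ (i.e., dim W_n^{[μ,ν]} / n^{k+ℓ} is bounded above and below by positive constants). -/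
open Finset Filter

/-- The signature `(μ_1, …, μ_{ℓ(μ)}, 0, …, 0, -ν_{ℓ(ν)}, …, -ν_1)` of the rational
irreducible representation `W_n^{[μ,ν]}` of `U(n)`. -/
def ratSignature (μ ν : YoungDiagram) (n : ℕ) (i : Fin n) : ℤ :=
  if (i : ℕ) < μ.colLen 0 then (μ.rowLen i : ℤ)
  else if n - ν.colLen 0 ≤ (i : ℕ) then -(ν.rowLen (n - 1 - (i : ℕ)) : ℤ)
  else 0

/-- The dimension of the irreducible representation of `U(n)` with signature `σ`,
given by the Weyl dimension formula `∏_{1 ≤ i < j ≤ n} (σ_i - σ_j + j - i)/(j - i)`. -/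
noncomputable def signatureDim (n : ℕ) (σ : Fin n → ℤ) : ℚ :=
  ∏ p ∈ Finset.univ.filter (fun p : Fin n × Fin n => p.1 < p.2),
    ((σ p.1 - σ p.2 + (p.2 : ℕ) - (p.1 : ℕ) : ℤ) : ℚ) / (((p.2 : ℕ) - (p.1 : ℕ) : ℕ) : ℚ)

/-- The dimension `D_{[μ,ν]}(n)` of the rational representation `W_n^{[μ,ν]}` of `U(n)`. -/
noncomputable def ratDim (μ ν : YoungDiagram) (n : ℕ) : ℚ :=
  signatureDim n (ratSignature μ ν n)

open Polynomial

/-!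
Weyl's product formula splits along the three blocks of the signature (rows of `μ`, zeros, rows
of `ν`). Pairs inside the zero block contribute `1`; a row of `μ` (or of `ν`) against the zero
block telescopes to a rising factorial in `n`; a row `i` of `μ` against a row `q` of `ν`
contributes `(n + μᵢ + ν_q - 1 - q - i) / (n - 1 - q - i)`. So `D(n) · G(n) = K · M(n)` with
`K > 0` and monic integer polynomials `G`, `M` of degrees `r s` and `k + ℓ + r s`, where
`r = ℓ(μ)`, `s = ℓ(ν)`.

`D(n)` is an integer: the Weyl quotient is a Vandermonde determinant divided by the
superfactorial, which divides it. Hence `G(n) ∣ K.num · M(n)` for infinitely many integers `n`,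
which forces `G ∣ K.num · M`, and `D` is the quotient: a polynomial of degree `k + ℓ` with
leading coefficient `K`.
-/

namespace Polynomial

theorem eventually_eval_between_of_leadingCoeff_pos {K : Type*} [NormedField K] [LinearOrder K]
    [IsStrictOrderedRing K] [OrderTopology K] (P : K[X]) (hP : 0 < P.leadingCoeff) :
    ∀ᶠ x : K in atTop, P.leadingCoeff / 2 * x ^ P.natDegree ≤ P.eval x ∧
      P.eval x ≤ 2 * P.leadingCoeff * x ^ P.natDegree := by
  have hratio : Tendsto (fun x => P.eval x / (P.leadingCoeff * x ^ P.natDegree)) atTop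
      (nhds 1) :=
    (Asymptotics.isEquivalent_iff_tendsto_one
      ((eventually_gt_atTop 0).mono fun x hx => by positivity)).mp (isEquivalent_atTop_lead P)
  filter_upwards [hratio.eventually (Ioo_mem_nhds one_half_lt_one one_lt_two),
    eventually_gt_atTop 0] with x ⟨hlo, hhi⟩ hx
  have hlead : 0 < P.leadingCoeff * x ^ P.natDegree := by positivity
  rw [lt_div_iff₀ hlead] at hlo
  rw [div_lt_iff₀ hlead] at hhi
  constructor <;> linarith

theorem exists_eq_eval_of_intCast_mul_eval_eq {f : ℕ → ℚ} {N : ℕ} {K : ℚ} {M G : ℤ[X]}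
    (hK : K ≠ 0) (hM : M.Monic) (hG : G.Monic) (hf : ∀ n ≥ N, ∃ m : ℤ, f n = m)
    (hG0 : ∀ n ≥ N, G.eval (n : ℤ) ≠ 0)
    (h : ∀ n ≥ N, f n * G.eval (n : ℤ) = K * M.eval (n : ℤ)) :
    ∃ P : ℚ[X], P.natDegree = M.natDegree - G.natDegree ∧ P.leadingCoeff = K ∧
      ∀ n ≥ N, f n = P.eval (n : ℚ) := by
  have hden : (K.den : ℚ) ≠ 0 := by exact_mod_cast K.den_ne_zero
  have hnum : K.num ≠ 0 := Rat.num_ne_zero.mpr hK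
  -- `K.den * f n` is an integer, so `G n ∣ K.num * M n` for all `n ≥ N`.
  have hdvd : G ∣ C K.num * M := by
    refine dvd_of_infinite_eval_dvd_eval hG (Set.Infinite.mono ?_
      ((Set.Ici_infinite N).image Nat.cast_injective.injOn))
    rintro _ ⟨n, hn, rfl⟩
    obtain ⟨m, hm⟩ := hf n hn
    refine ⟨K.den * m, ?_⟩
    have := congrArg (· * (K.den : ℚ)) (h n hn)
    simp only [hm, mul_right_comm K, Rat.mul_den_eq_num] at this
    rw [eval_mul, eval_C]
    exact_mod_cast (by push_cast; linear_combination -this :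
      ((K.num * M.eval (n : ℤ) : ℤ) : ℚ) = G.eval (n : ℤ) * ((K.den * m : ℤ) : ℚ))
  obtain ⟨P₀, hP₀⟩ := hdvd
  have hP₀0 : P₀ ≠ 0 := by
    rintro rfl
    exact mul_ne_zero (C_ne_zero.mpr hnum) hM.ne_zero (by simpa using hP₀)
  refine ⟨C (K.den : ℚ)⁻¹ * P₀.map (Int.castRingHom ℚ), ?_, ?_, fun n hn => ?_⟩
  · have := congrArg natDegree hP₀
    rw [natDegree_C_mul hnum, natDegree_mul hG.ne_zero hP₀0] at this
    rw [natDegree_C_mul (inv_ne_zero hden),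
      natDegree_map_eq_of_injective (RingHom.injective_int _)]
    omega
  · have := congrArg leadingCoeff hP₀
    rw [leadingCoeff_mul, leadingCoeff_mul, leadingCoeff_C, hM.leadingCoeff, hG.leadingCoeff,
      mul_one, one_mul] at this
    rw [leadingCoeff_mul, leadingCoeff_C, leadingCoeff_map_of_injective
      (RingHom.injective_int _), ← this, eq_intCast, ← div_eq_inv_mul, Rat.num_div_den]
  · have hGn : ((G.eval (n : ℤ) : ℤ) : ℚ) ≠ 0 := by exact_mod_cast hG0 n hn
    have hP₀n := congrArg (fun p => ((p.eval (n : ℤ) : ℤ) : ℚ)) hP₀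
    simp only [eval_mul, eval_C, Int.cast_mul] at hP₀n
    have key : f n * G.eval (n : ℤ) = G.eval (n : ℤ) * (P₀.eval (n : ℤ) / K.den) := by
      rw [h n hn, mul_div_assoc', eq_div_iff hden, mul_right_comm, Rat.mul_den_eq_num, hP₀n]
    rw [eval_mul, eval_C, ← Int.cast_natCast n, eval_intCast_map, eq_intCast, inv_mul_eq_div]
    exact mul_left_cancel₀ hGn (by rw [mul_comm, key, Int.cast_natCast])

end Polynomial

theorem ascPochhammer_eval_add_one_mul {K : Type*} [CommSemiring K] (c : ℕ) (x : K) :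
    (ascPochhammer K c).eval (x + 1) * x = (ascPochhammer K c).eval x * (x + c) := by
  have := congrArg (eval x) (ascPochhammer_succ_left (S := K) c)
  rw [ascPochhammer_succ_eval, eval_mul, eval_X, eval_comp, eval_add, eval_X, eval_one] at this
  rw [this, mul_comm]

theorem prod_Ico_div_eq_ascPochhammer_eval {K : Type*} [Field K] [LinearOrder K]
    [IsStrictOrderedRing K] (c i : ℕ) {u v : ℕ} (hiu : i < u) (huv : u ≤ v) :
    ∏ j ∈ Ico u v, ((c + j - i : K) / (j - i)) =
      (ascPochhammer K c).eval ((v : K) - i) / (ascPochhammer K c).eval ((u : K) - i) := by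
  have hpos : ∀ w : ℕ, u ≤ w → 0 < (w : K) - i := fun w hw => by
    rw [sub_pos]; exact_mod_cast hiu.trans_le hw
  induction v, huv using Nat.le_induction with
  | base => rw [Ico_self, prod_empty, div_self (ascPochhammer_pos c _ (hpos u le_rfl)).ne']
  | succ v huv ih =>
    have hu := (ascPochhammer_pos c _ (hpos u le_rfl)).ne'
    rw [prod_Ico_succ_top huv, ih, div_mul_div_comm, div_eq_div_iff (mul_ne_zero hu
      (hpos v huv).ne') hu, Nat.cast_succ, add_sub_right_comm (v : K)]
    linear_combination -(ascPochhammer K c).eval ((u : K) - i) *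
      ascPochhammer_eval_add_one_mul c ((v : K) - i)

theorem ascPochhammer_eval_intCast {S : Type*} [Ring S] (c : ℕ) (x : ℤ) :
    (((ascPochhammer ℤ c).eval x : ℤ) : S) = (ascPochhammer S c).eval (x : S) := by
  rw [← ascPochhammer_map (Int.castRingHom S), eval_intCast_map, eq_intCast, Int.cast_id]

theorem monic_prod_ascPochhammer_comp_X_sub_C {ι R : Type*} [CommRing R] [IsDomain R]
    (t : Finset ι) (c : ι → ℕ) (x : ι → R) :
    (∏ i ∈ t, (ascPochhammer R (c i)).comp (X - C (x i))).Monic :=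
  monic_prod_of_monic _ _ fun i _ => (monic_ascPochhammer R (c i)).comp_X_sub_C (x i)

theorem natDegree_prod_ascPochhammer_comp_X_sub_C {ι R : Type*} [CommRing R] [IsDomain R]
    (t : Finset ι) (c : ι → ℕ) (x : ι → R) :
    (∏ i ∈ t, (ascPochhammer R (c i)).comp (X - C (x i))).natDegree = ∑ i ∈ t, c i := by
  rw [natDegree_prod_of_monic _ _ fun i _ => (monic_ascPochhammer R (c i)).comp_X_sub_C (x i)]
  simp only [natDegree_comp, ascPochhammer_natDegree, natDegree_X_sub_C, mul_one]

theorem prod_ascPochhammer_eval_pos (c : ℕ → ℕ) (t : ℕ) :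
    0 < ∏ i ∈ range t, (ascPochhammer ℚ (c i)).eval ((t : ℚ) - i) :=
  prod_pos fun i hi => ascPochhammer_pos _ _ (sub_pos.mpr (by exact_mod_cast mem_range.mp hi))

theorem YoungDiagram.card_cells_eq_sum_rowLen (μ : YoungDiagram) :
    μ.cells.card = ∑ i ∈ range (μ.colLen 0), μ.rowLen i := by
  rw [card_eq_sum_card_fiberwise (f := Prod.fst) fun c hc =>
    mem_range.mpr (YoungDiagram.mem_iff_lt_colLen.mp (μ.up_left_mem le_rfl (Nat.zero_le _) hc))]
  exact sum_congr rfl fun i _ => (μ.rowLen_eq_card).symm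

theorem signatureDim_succ_eq_det_vandermonde_div (N : ℕ) (σ : Fin (N + 1) → ℤ) :
    signatureDim (N + 1) σ =
      ((Matrix.vandermonde fun i => (i : ℤ) - σ i).det : ℚ) / N.superFactorial := by
  have hpairs : ∀ f : Fin (N + 1) → Fin (N + 1) → ℚ,
      ∏ p ∈ univ.filter (fun p : Fin (N + 1) × Fin (N + 1) => p.1 < p.2), f p.1 p.2 =
        ∏ i, ∏ j ∈ Ioi i, f i j := fun f => by
    rw [prod_filter, Fintype.prod_prod_type]
    exact prod_congr rfl fun i _ => by rw [← prod_filter, filter_lt_eq_Ioi]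
  rw [signatureDim, prod_div_distrib, hpairs fun i j => ((σ i - σ j + (j : ℕ) - (i : ℕ) : ℤ) : ℚ),
    hpairs fun i j => (((j : ℕ) - (i : ℕ) : ℕ) : ℚ), Matrix.det_vandermonde,
    ← Matrix.det_vandermonde_id_eq_superFactorial (R := ℚ), Matrix.det_vandermonde]
  push_cast
  congr 1 <;> refine prod_congr rfl fun i _ => prod_congr rfl fun j hj => ?_
  · ring
  · rw [Nat.cast_sub (Fin.le_iff_val_le_val.mp (mem_Ioi.mp hj).le)]

theorem exists_signatureDim_eq_intCast (n : ℕ) (σ : Fin n → ℤ) :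
    ∃ m : ℤ, signatureDim n σ = m := by
  cases n with
  | zero => exact ⟨1, by simp [signatureDim]⟩
  | succ N =>
    obtain ⟨m, hm⟩ := Matrix.superFactorial_dvd_vandermonde_det fun i => (i : ℤ) - σ i
    have hsf : (N.superFactorial : ℚ) ≠ 0 := by
      rw [← Nat.prod_range_succ_factorial]
      exact_mod_cast (prod_pos fun i _ => Nat.factorial_pos i).ne'
    refine ⟨m, ?_⟩
    rw [signatureDim_succ_eq_det_vandermonde_div, hm]
    push_cast
    field_simp

def ascPairs (u v : ℕ) : Finset (ℕ × ℕ) :=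
  (Ico u v ×ˢ Ico u v).filter fun p => p.1 < p.2

noncomputable def weylFactor (τ : ℕ → ℤ) (i j : ℕ) : ℚ :=
  ((τ i : ℚ) - τ j + j - i) / ((j : ℚ) - i)

theorem signatureDim_eq_prod_weylFactor (n : ℕ) (τ : ℕ → ℤ) :
    signatureDim n (fun i => τ i) = ∏ p ∈ ascPairs 0 n, weylFactor τ p.1 p.2 := by
  refine prod_nbij (fun p => ((p.1 : ℕ), (p.2 : ℕ))) ?_ ?_ ?_ ?_
  · rintro ⟨i, j⟩ hp
    simp only [mem_filter, mem_univ, true_and] at hp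
    simp [ascPairs, Fin.lt_def.mp hp]
  · rintro ⟨i, j⟩ _ ⟨i', j'⟩ _ h
    simp only [Prod.mk.injEq, Fin.val_inj] at h
    rw [h.1, h.2]
  · rintro ⟨i, j⟩ hp
    simp only [ascPairs, coe_filter, mem_product, mem_Ico, Set.mem_ofPred_eq] at hp
    exact ⟨(⟨i, hp.1.1.2⟩, ⟨j, hp.1.2.2⟩), by simpa using hp.2, rfl⟩
  · rintro ⟨i, j⟩ hp
    simp only [mem_filter, mem_univ, true_and] at hp
    rw [weylFactor, Nat.cast_sub (Fin.lt_def.mp hp).le]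
    push_cast
    ring

section Reindexing

variable {M : Type*} [CommMonoid M]

theorem prod_ascPairs_split (f : ℕ → ℕ → M) {u m v : ℕ} (hum : u ≤ m) (hmv : m ≤ v) :
    ∏ p ∈ ascPairs u v, f p.1 p.2 = (∏ p ∈ ascPairs u m, f p.1 p.2) *
      (∏ p ∈ Ico u m ×ˢ Ico m v, f p.1 p.2) * ∏ p ∈ ascPairs m v, f p.1 p.2 := by
  have hsplit : ascPairs u v = ascPairs u m ∪ Ico u m ×ˢ Ico m v ∪ ascPairs m v := by
    ext p
    simp only [ascPairs, mem_union, mem_filter, mem_product, mem_Ico]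
    omega
  rw [hsplit, prod_union, prod_union] <;>
    simp only [ascPairs, disjoint_left, mem_union, mem_filter, mem_product, mem_Ico] <;> omega

theorem prod_ascPairs_reflect (f : ℕ → ℕ → M) {u v n : ℕ} (hv : v ≤ n) :
    ∏ p ∈ ascPairs u v, f (n - 1 - p.2) (n - 1 - p.1) =
      ∏ p ∈ ascPairs (n - v) (n - u), f p.1 p.2 := by
  refine prod_nbij' (fun p => (n - 1 - p.2, n - 1 - p.1)) (fun p => (n - 1 - p.2, n - 1 - p.1))
    ?_ ?_ ?_ ?_ fun _ _ => rfl <;>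
  · intro p hp
    simp only [ascPairs, mem_filter, mem_product, mem_Ico, Prod.ext_iff] at hp ⊢
    omega

theorem prod_Ico_product_reflect (f : ℕ → ℕ → M) {u v u' v' n : ℕ} (hv : v ≤ n) (hv' : v' ≤ n) :
    ∏ p ∈ Ico u v ×ˢ Ico u' v', f (n - 1 - p.2) (n - 1 - p.1) =
      ∏ p ∈ Ico (n - v') (n - u') ×ˢ Ico (n - v) (n - u), f p.1 p.2 := by
  refine prod_nbij' (fun p => (n - 1 - p.2, n - 1 - p.1)) (fun p => (n - 1 - p.2, n - 1 - p.1))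
    ?_ ?_ ?_ ?_ fun _ _ => rfl <;>
  · intro p hp
    simp only [mem_product, mem_Ico, Prod.ext_iff] at hp ⊢
    omega

end Reindexing

theorem weylFactor_eq_one {τ : ℕ → ℤ} {i j : ℕ} (hij : i < j) (hτ : τ i = τ j) :
    weylFactor τ i j = 1 := by
  have : (j : ℚ) - i ≠ 0 := sub_ne_zero.mpr (by exact_mod_cast hij.ne')
  rw [weylFactor, hτ, sub_self, zero_add, div_self this]

theorem weylFactor_pos {τ : ℕ → ℤ} {i j : ℕ} (hij : i < j) (hτ : τ j ≤ τ i) :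
    0 < weylFactor τ i j := by
  have hij' : (i : ℚ) < j := by exact_mod_cast hij
  have hτ' : (τ j : ℚ) ≤ τ i := by exact_mod_cast hτ
  exact div_pos (by linarith) (by linarith)

theorem weylFactor_reflect {τ τ' : ℕ → ℤ} {n i j : ℕ} (hτ : ∀ k < n, τ' k = -τ (n - 1 - k))
    (hi : i < n) (hj : j < n) : weylFactor τ' (n - 1 - j) (n - 1 - i) = weylFactor τ i j := by
  have hcast : ∀ k < n, ((n - 1 - k : ℕ) : ℚ) = n - 1 - k := fun k hk => by
    rw [Nat.cast_sub (by omega), Nat.cast_sub (by omega), Nat.cast_one]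
  rw [weylFactor, weylFactor, hτ _ (by omega), hτ _ (by omega), Nat.sub_sub_self (by omega),
    Nat.sub_sub_self (by omega), hcast j hj, hcast i hi]
  push_cast
  ring_nf

-- `ratSignature μ ν n` is definitionally `ratSig μ.rowLen ν.rowLen (μ.colLen 0) (ν.colLen 0) n`
-- on `Fin n`.
def ratSig (a b : ℕ → ℕ) (r s n i : ℕ) : ℤ :=
  if i < r then a i else if n - s ≤ i then -(b (n - 1 - i) : ℤ) else 0

-- The index blocks are `head = [0, r)`, `mid = [r, n - s)` and `tail = [n - s, n)`.
section RatSig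

variable (a b : ℕ → ℕ) {r s n : ℕ}

theorem ratSig_swap (h : r + s ≤ n) :
    ∀ k < n, ratSig b a s r n k = -ratSig a b r s n (n - 1 - k) := by
  intro k hk
  simp only [ratSig]
  split_ifs <;> first | omega | simp [Nat.sub_sub_self (by omega : k ≤ n - 1)]

theorem prod_weylFactor_ratSig_head_head :
    ∏ p ∈ ascPairs 0 r, weylFactor (ratSig a b r s n) p.1 p.2 =
      ∏ p ∈ ascPairs 0 r, weylFactor (fun i => a i) p.1 p.2 := by
  refine prod_congr rfl fun p hp => ?_
  simp only [ascPairs, mem_filter, mem_product, mem_Ico] at hp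
  simp only [weylFactor, ratSig, if_pos hp.1.1.2, if_pos hp.1.2.2]

theorem prod_weylFactor_ratSig_mid_mid :
    ∏ p ∈ ascPairs r (n - s), weylFactor (ratSig a b r s n) p.1 p.2 = 1 := by
  refine prod_eq_one fun p hp => ?_
  simp only [ascPairs, mem_filter, mem_product, mem_Ico] at hp
  refine weylFactor_eq_one hp.2 ?_
  simp only [ratSig]
  rw [if_neg (by omega), if_neg (by omega), if_neg (by omega), if_neg (by omega)]

theorem prod_weylFactor_ratSig_head_mid (h : r + s ≤ n) :
    ∏ p ∈ range r ×ˢ Ico r (n - s), weylFactor (ratSig a b r s n) p.1 p.2 =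
      ∏ i ∈ range r, (ascPochhammer ℚ (a i)).eval ((n : ℚ) - s - i) /
        (ascPochhammer ℚ (a i)).eval ((r : ℚ) - i) := by
  rw [prod_product]
  refine prod_congr rfl fun i hi => ?_
  rw [mem_range] at hi
  rw [← Nat.cast_sub (by omega : s ≤ n), ← prod_Ico_div_eq_ascPochhammer_eval _ _ hi (by omega)]
  refine prod_congr rfl fun j hj => ?_
  rw [mem_Ico] at hj
  simp only [weylFactor, ratSig]
  rw [if_pos hi, if_neg (by omega), if_neg (by omega)]
  push_cast
  ring

theorem prod_weylFactor_ratSig_head_tail (h : r + s ≤ n) :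
    ∏ p ∈ range r ×ˢ Ico (n - s) n, weylFactor (ratSig a b r s n) p.1 p.2 =
      ∏ i ∈ range r, ∏ q ∈ range s,
        ((n : ℚ) + a i + b q - 1 - q - i) / ((n : ℚ) - 1 - q - i) := by
  rw [prod_product]
  refine prod_congr rfl fun i hi => ?_
  rw [mem_range] at hi
  refine prod_nbij' (fun j => n - 1 - j) (fun q => n - 1 - q) ?_ ?_ ?_ ?_ ?_
  all_goals
    intro j hj
    simp only [mem_range, mem_Ico] at hj
  · rw [mem_range]; omega
  · simp only [mem_Ico]; omega
  · omega
  · omega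
  · simp only [weylFactor, ratSig]
    have hcast : ((n - 1 - j : ℕ) : ℚ) = n - 1 - j := by
      rw [Nat.cast_sub (by omega), Nat.cast_sub (by omega), Nat.cast_one]
    rw [if_pos hi, if_neg (by omega), if_pos (by omega), hcast]
    push_cast
    ring

theorem prod_weylFactor_ratSig_mid_tail (h : r + s ≤ n) :
    ∏ p ∈ Ico r (n - s) ×ˢ Ico (n - s) n, weylFactor (ratSig a b r s n) p.1 p.2 =
      ∏ q ∈ range s, (ascPochhammer ℚ (b q)).eval ((n : ℚ) - r - q) /
        (ascPochhammer ℚ (b q)).eval ((s : ℚ) - q) := calc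
  _ = ∏ p ∈ Ico r (n - s) ×ˢ Ico (n - s) n,
        weylFactor (ratSig b a s r n) (n - 1 - p.2) (n - 1 - p.1) := by
    refine prod_congr rfl fun p hp => ?_
    simp only [mem_product, mem_Ico] at hp
    exact (weylFactor_reflect (ratSig_swap a b h) (by omega) (by omega)).symm
  _ = ∏ p ∈ range s ×ˢ Ico s (n - r), weylFactor (ratSig b a s r n) p.1 p.2 := by
    rw [prod_Ico_product_reflect _ (by omega) le_rfl, Nat.sub_self, Nat.sub_sub_self (by omega),
      range_eq_Ico]
  _ = _ := prod_weylFactor_ratSig_head_mid b a (by omega)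

theorem prod_weylFactor_ratSig_tail_tail (h : r + s ≤ n) :
    ∏ p ∈ ascPairs (n - s) n, weylFactor (ratSig a b r s n) p.1 p.2 =
      ∏ p ∈ ascPairs 0 s, weylFactor (fun q => b q) p.1 p.2 := calc
  _ = ∏ p ∈ ascPairs (n - s) n, weylFactor (ratSig b a s r n) (n - 1 - p.2) (n - 1 - p.1) := by
    refine prod_congr rfl fun p hp => ?_
    simp only [ascPairs, mem_filter, mem_product, mem_Ico] at hp
    exact (weylFactor_reflect (ratSig_swap a b h) (by omega) (by omega)).symm
  _ = ∏ p ∈ ascPairs 0 s, weylFactor (ratSig b a s r n) p.1 p.2 := by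
    rw [prod_ascPairs_reflect _ le_rfl, Nat.sub_self, Nat.sub_sub_self (by omega)]
  _ = _ := prod_weylFactor_ratSig_head_head b a

end RatSig

theorem prod_weylFactor_ratSig {a b : ℕ → ℕ} {r s n : ℕ} (h : r + s ≤ n) :
    ∏ p ∈ ascPairs 0 n, weylFactor (ratSig a b r s n) p.1 p.2 =
      (∏ p ∈ ascPairs 0 r, weylFactor (fun i => a i) p.1 p.2) *
      (∏ i ∈ range r, (ascPochhammer ℚ (a i)).eval ((n : ℚ) - s - i) /
        (ascPochhammer ℚ (a i)).eval ((r : ℚ) - i)) *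
      (∏ i ∈ range r, ∏ q ∈ range s,
        ((n : ℚ) + a i + b q - 1 - q - i) / ((n : ℚ) - 1 - q - i)) *
      (∏ q ∈ range s, (ascPochhammer ℚ (b q)).eval ((n : ℚ) - r - q) /
        (ascPochhammer ℚ (b q)).eval ((s : ℚ) - q)) *
      ∏ p ∈ ascPairs 0 s, weylFactor (fun q => b q) p.1 p.2 := by
  have hsplit : Ico 0 r ×ˢ Ico r n = range r ×ˢ Ico r (n - s) ∪ range r ×ˢ Ico (n - s) n := by
    rw [← product_union, Ico_union_Ico_eq_Ico (by omega) (by omega), range_eq_Ico]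
  rw [prod_ascPairs_split _ (Nat.zero_le r) (by omega : r ≤ n),
    prod_ascPairs_split _ (by omega : r ≤ n - s) (by omega : n - s ≤ n), hsplit,
    prod_union (disjoint_product.mpr (Or.inr (Ico_disjoint_Ico_consecutive _ _ _))),
    prod_weylFactor_ratSig_head_head, prod_weylFactor_ratSig_head_mid a b h,
    prod_weylFactor_ratSig_head_tail a b h, prod_weylFactor_ratSig_mid_mid,
    prod_weylFactor_ratSig_mid_tail a b h, prod_weylFactor_ratSig_tail_tail a b h]
  ring

section RatDimPolynomials

variable (a b : ℕ → ℕ) (r s : ℕ)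

noncomputable def ratDimNumerator : ℤ[X] :=
  (∏ i ∈ range r, (ascPochhammer ℤ (a i)).comp (X - C ((s : ℤ) + i))) *
    (∏ q ∈ range s, (ascPochhammer ℤ (b q)).comp (X - C ((r : ℤ) + q))) *
    ∏ i ∈ range r, ∏ q ∈ range s, (X - C (1 + (q : ℤ) + i - a i - b q))

noncomputable def ratDimDenominator : ℤ[X] :=
  ∏ i ∈ range r, ∏ q ∈ range s, (X - C (1 + (q : ℤ) + i))

noncomputable def ratDimConst : ℚ :=
  (∏ p ∈ ascPairs 0 r, weylFactor (fun i => a i) p.1 p.2) *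
    (∏ p ∈ ascPairs 0 s, weylFactor (fun q => b q) p.1 p.2) /
    ((∏ i ∈ range r, (ascPochhammer ℚ (a i)).eval ((r : ℚ) - i)) *
      ∏ q ∈ range s, (ascPochhammer ℚ (b q)).eval ((s : ℚ) - q))

theorem ratDimNumerator_monic : (ratDimNumerator a b r s).Monic :=
  ((monic_prod_ascPochhammer_comp_X_sub_C _ _ _).mul
    (monic_prod_ascPochhammer_comp_X_sub_C _ _ _)).mul
    (monic_prod_of_monic _ _ fun _ _ => monic_prod_X_sub_C _ _)

theorem ratDimDenominator_monic : (ratDimDenominator r s).Monic :=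
  monic_prod_of_monic _ _ fun _ _ => monic_prod_X_sub_C _ _

theorem natDegree_ratDimNumerator :
    (ratDimNumerator a b r s).natDegree = ∑ i ∈ range r, a i + ∑ q ∈ range s, b q + r * s := by
  rw [ratDimNumerator, Monic.natDegree_mul ((monic_prod_ascPochhammer_comp_X_sub_C _ _ _).mul
      (monic_prod_ascPochhammer_comp_X_sub_C _ _ _))
      (monic_prod_of_monic _ _ fun _ _ => monic_prod_X_sub_C _ _),
    Monic.natDegree_mul (monic_prod_ascPochhammer_comp_X_sub_C _ _ _)
      (monic_prod_ascPochhammer_comp_X_sub_C _ _ _),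
    natDegree_prod_ascPochhammer_comp_X_sub_C, natDegree_prod_ascPochhammer_comp_X_sub_C,
    natDegree_prod_of_monic _ _ fun _ _ => monic_prod_X_sub_C _ _]
  simp only [natDegree_finsetProd_X_sub_C_eq_card, card_range, sum_const, smul_eq_mul]

theorem natDegree_ratDimDenominator : (ratDimDenominator r s).natDegree = r * s := by
  rw [ratDimDenominator, natDegree_prod_of_monic _ _ fun _ _ => monic_prod_X_sub_C _ _]
  simp only [natDegree_finsetProd_X_sub_C_eq_card, card_range, sum_const, smul_eq_mul]

theorem ratDimDenominator_eval_pos {n : ℕ} (h : r + s ≤ n) :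
    0 < (ratDimDenominator r s).eval (n : ℤ) := by
  rw [ratDimDenominator, eval_prod]
  refine prod_pos fun i hi => ?_
  rw [eval_prod]
  refine prod_pos fun q hq => ?_
  rw [mem_range] at hi hq
  rw [eval_sub, eval_X, eval_C]
  omega

theorem ratDimConst_pos (ha : Antitone a) (hb : Antitone b) : 0 < ratDimConst a b r s := by
  have hweyl : ∀ (c : ℕ → ℕ) (t : ℕ), Antitone c →
      0 < ∏ p ∈ ascPairs 0 t, weylFactor (fun i => c i) p.1 p.2 := fun c t hc =>
    prod_pos fun p hp => weylFactor_pos (mem_filter.mp hp).2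
      (by exact_mod_cast hc (mem_filter.mp hp).2.le)
  exact div_pos (mul_pos (hweyl a r ha) (hweyl b s hb))
    (mul_pos (prod_ascPochhammer_eval_pos a r) (prod_ascPochhammer_eval_pos b s))

end RatDimPolynomials

theorem signatureDim_ratSig_mul_eval_ratDimDenominator {a b : ℕ → ℕ} {r s n : ℕ}
    (h : r + s ≤ n) :
    signatureDim n (fun i => ratSig a b r s n i) * (ratDimDenominator r s).eval (n : ℤ) =
      ratDimConst a b r s * (ratDimNumerator a b r s).eval (n : ℤ) := by
  have hden : ∀ i ∈ range r, ∀ q ∈ range s, (n : ℚ) - 1 - q - i ≠ 0 := by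
    intro i hi q hq
    rw [mem_range] at hi hq
    have : (q : ℚ) + i + 1 < n := by exact_mod_cast (by omega : q + i + 1 < n)
    linarith
  have hG : (((ratDimDenominator r s).eval (n : ℤ) : ℤ) : ℚ) =
      ∏ i ∈ range r, ∏ q ∈ range s, ((n : ℚ) - 1 - q - i) := by
    simp only [ratDimDenominator, eval_prod, eval_sub, eval_X, eval_C, Int.cast_prod, Int.cast_sub]
    push_cast
    exact prod_congr rfl fun i _ => prod_congr rfl fun q _ => by ring
  have hF : (((ratDimNumerator a b r s).eval (n : ℤ) : ℤ) : ℚ) =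
      (∏ i ∈ range r, (ascPochhammer ℚ (a i)).eval ((n : ℚ) - s - i)) *
      (∏ q ∈ range s, (ascPochhammer ℚ (b q)).eval ((n : ℚ) - r - q)) *
      ∏ i ∈ range r, ∏ q ∈ range s, ((n : ℚ) + a i + b q - 1 - q - i) := by
    simp only [ratDimNumerator, eval_mul, eval_prod, eval_comp, eval_sub, eval_X, eval_C,
      Int.cast_mul, Int.cast_prod, Int.cast_sub, ascPochhammer_eval_intCast]
    push_cast
    congr 1
    · congr 1
      · exact prod_congr rfl fun i _ => by ring_nf
      · exact prod_congr rfl fun i _ => by ring_nf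
    · exact prod_congr rfl fun i _ => prod_congr rfl fun q _ => by ring
  rw [signatureDim_eq_prod_weylFactor, prod_weylFactor_ratSig h, hG, hF, ratDimConst]
  simp only [prod_div_distrib]
  have hden_prod := prod_ne_zero_iff.mpr fun i hi => prod_ne_zero_iff.mpr (hden i hi)
  field_simp [(prod_ascPochhammer_eval_pos a r).ne', (prod_ascPochhammer_eval_pos b s).ne']

/-- Fix partitions `μ ⊢ k` and `ν ⊢ ℓ`. Then `dim W_n^{[μ,ν]}` agrees with a polynomial in
`n` with rational coefficients for all `n ≥ ℓ(μ) + ℓ(ν)`, and `dim W_n^{[μ,ν]} ≍ n^{k+ℓ}`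
as `n → ∞`. -/
theorem ratDim_polynomial_and_asymp (μ ν : YoungDiagram) (k l : ℕ)
    (hk : μ.cells.card = k) (hl : ν.cells.card = l) :
    (∃ P : Polynomial ℚ, ∀ n : ℕ, μ.colLen 0 + ν.colLen 0 ≤ n →
        ratDim μ ν n = P.eval (n : ℚ)) ∧
    (∃ c₁ c₂ : ℚ, 0 < c₁ ∧ 0 < c₂ ∧ ∀ᶠ n : ℕ in atTop,
        c₁ * (n : ℚ) ^ (k + l) ≤ ratDim μ ν n ∧ ratDim μ ν n ≤ c₂ * (n : ℚ) ^ (k + l)) := by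
  have hK := ratDimConst_pos _ _ (μ.colLen 0) (ν.colLen 0) (fun _ _ => μ.rowLen_anti _ _)
    (fun _ _ => ν.rowLen_anti _ _)
  obtain ⟨P, hdeg, hlead, hP⟩ := exists_eq_eval_of_intCast_mul_eval_eq (f := ratDim μ ν) hK.ne'
    (ratDimNumerator_monic _ _ _ _) (ratDimDenominator_monic _ _)
    (fun n _ => exists_signatureDim_eq_intCast n (ratSignature μ ν n))
    (fun n hn => (ratDimDenominator_eval_pos _ _ hn).ne')
    (fun n hn => signatureDim_ratSig_mul_eval_ratDimDenominator hn)
  rw [natDegree_ratDimNumerator, natDegree_ratDimDenominator,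
    ← YoungDiagram.card_cells_eq_sum_rowLen, ← YoungDiagram.card_cells_eq_sum_rowLen, hk, hl,
    Nat.add_sub_cancel] at hdeg
  rw [← hlead] at hK
  refine ⟨⟨P, hP⟩, P.leadingCoeff / 2, 2 * P.leadingCoeff, by positivity, by positivity, ?_⟩
  filter_upwards [tendsto_natCast_atTop_atTop.eventually
    (P.eventually_eval_between_of_leadingCoeff_pos hK),
    eventually_ge_atTop (μ.colLen 0 + ν.colLen 0)] with n hbounds hn
  rw [hP n hn, ← hdeg]
  exact hbounds
end

section
/- Let n ≥ 2 and λ be a Young diagram with ℓ(λ) < n. Then dim W_n^λ ≥ ∏_{i=1}^{n−1} (1 + x_i(λ))^{v_i}, where x_i(λ) = λ_i − λ_{i+1} and v_i are positive reals satisfying v_j = v_{n−j} and v_j ≥ j·max(1, log(n−1) − log j) for 1 ≤ j ≤ n/2; concretely one may take v_j as arising from the AM-GM inequality applied to the Weyl dimension formula dim W_n^λ = ∏_{1≤i<j≤n} (λ_i − λ_j + j − i)/(j − i). -/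
/-!
For `i < j` the Weyl factor `(λ_i - λ_j + j - i) / (j - i)` is the arithmetic mean of the
`j - i` numbers `1 + x_k`, `i < k ≤ j`, so by AM-GM it dominates their geometric mean. Multiplying
over all pairs, `1 + x_k` collects the exponent `v_k = ∑_{i < k ≤ j} 1 / (j - i)`. For `2k ≤ n`
the pairs with `j ≤ 2k` have mean gap `k`, so the harmonic-arithmetic mean inequality gives
`v_k ≥ k`, while `∑_{d = m}^{M-1} 1/d ≥ log M - log m` gives `v_k ≥ k (log (n - 1) - log k)`.
-/

open Finset Real

/-- The Weyl dimension formula for the irreducible representation `W_n^λ` of `SU(n)`: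
`dim W_n^λ = ∏_{1 ≤ i < j ≤ n} (λ_i - λ_j + j - i)/(j - i)` (here indices are
0-based: `λ_i = lam.rowLen i`). -/
noncomputable def weylDim (n : ℕ) (lam : YoungDiagram) : ℝ :=
  ∏ p ∈ (Finset.range n ×ˢ Finset.range n).filter (fun p => p.1 < p.2),
    (((lam.rowLen p.1 : ℝ) - (lam.rowLen p.2 : ℝ) + (p.2 : ℝ) - (p.1 : ℝ)) /
      ((p.2 : ℝ) - (p.1 : ℝ)))

theorem Real.prod_rpow_inv_card_le_sum_div_card {ι : Type*} {s : Finset ι} (hs : s.Nonempty)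
    {z : ι → ℝ} (hz : ∀ i ∈ s, 0 ≤ z i) :
    ∏ i ∈ s, z i ^ (#s : ℝ)⁻¹ ≤ (∑ i ∈ s, z i) / #s := by
  have := geom_mean_le_arith_mean s (fun _ ↦ 1) z (fun _ _ ↦ zero_le_one)
    (by simpa using hs.card_pos) hz
  simp only [rpow_one, sum_const, nsmul_eq_mul, mul_one, one_mul] at this
  rwa [finsetProd_rpow s z hz]

theorem Real.log_add_one_sub_log_le_inv {x : ℝ} (hx : 0 < x) : log (x + 1) - log x ≤ x⁻¹ := by
  rw [← log_div (by positivity) hx.ne']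
  calc log ((x + 1) / x) ≤ (x + 1) / x - 1 := log_le_sub_one_of_pos (by positivity)
    _ = x⁻¹ := by field_simp; ring

theorem Real.log_sub_log_le_sum_inv {c : ℝ} {m M : ℕ} (hc : c < m) (hmM : m ≤ M) :
    log (M - c) - log (m - c) ≤ ∑ b ∈ Ico m M, ((b : ℝ) - c)⁻¹ := by
  rw [← sum_Ico_sub (fun b : ℕ ↦ log (b - c)) hmM]
  refine sum_le_sum fun b hb ↦ ?_
  have hbc : 0 < (b : ℝ) - c := by
    have : (m : ℝ) ≤ b := by exact_mod_cast (mem_Ico.1 hb).1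
    linarith
  simpa only [Nat.cast_succ, add_sub_right_comm] using log_add_one_sub_log_le_inv hbc

/-- The exponent of `1 + x_j` in the lower bound: the Weyl factors involving `x_j` are those of
the (0-based) rows `a < j ≤ b`, and each contributes `1 / (b - a)`. -/
noncomputable def weylWeight (n j : ℕ) : ℝ :=
  ∑ a ∈ range j, ∑ b ∈ Ico j n, ((b : ℝ) - a)⁻¹

theorem inv_sub_natCast_pos {a b : ℕ} (h : a < b) : 0 < ((b : ℝ) - a)⁻¹ :=
  inv_pos.2 (sub_pos.2 (by exact_mod_cast h))

theorem weylWeight_pos {n j : ℕ} (h0 : 0 < j) (hn : j < n) : 0 < weylWeight n j :=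
  sum_pos (fun _ ha ↦ sum_pos
      (fun _ hb ↦ inv_sub_natCast_pos ((mem_range.1 ha).trans_le (mem_Ico.1 hb).1))
      (nonempty_Ico.2 hn))
    (nonempty_range_iff.2 h0.ne')

theorem weylWeight_symm {n j : ℕ} (h : j ≤ n) : weylWeight n (n - j) = weylWeight n j := by
  simp only [weylWeight, ← sum_product']
  refine sum_nbij' (fun p ↦ (n - 1 - p.2, n - 1 - p.1)) (fun p ↦ (n - 1 - p.2, n - 1 - p.1))
    ?_ ?_ ?_ ?_ ?_ <;> simp only [mem_product, mem_range, mem_Ico, Prod.forall, Prod.mk.injEq] <;>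
    intro a b <;> try omega
  intro hab
  rw [← Nat.cast_sub (by omega), ← Nat.cast_sub (by omega)]
  congr 2
  omega

theorem le_weylWeight {n j : ℕ} (h : 2 * j ≤ n) : (j : ℝ) ≤ weylWeight n j := by
  rcases j.eq_zero_or_pos with rfl | hj
  · simp [weylWeight]
  set S := range j ×ˢ Ico j (2 * j)
  have hgap : ∀ p ∈ S, 0 < (p.2 : ℝ) - p.1 := fun p hp ↦ by
    simp only [S, mem_product, mem_range, mem_Ico] at hp
    exact sub_pos.2 (by exact_mod_cast (by omega : p.1 < p.2))
  have hcard : ∑ _p ∈ S, (1 : ℝ) = j ^ 2 := by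
    simp [S, sq, show 2 * j - j = j by omega]
  have hsum : ∑ p ∈ S, ((p.2 : ℝ) - p.1) = j ^ 3 := by
    simp only [S, sum_product, sum_Ico_eq_sum_range, show 2 * j - j = j by omega]
    push_cast
    simp only [sum_sub_distrib, sum_add_distrib, sum_const, card_range, nsmul_eq_mul, ← mul_sum]
    ring
  have htitu := sq_sum_div_le_sum_sq_div S (fun _ ↦ (1 : ℝ)) hgap
  rw [hcard, hsum] at htitu
  calc (j : ℝ) = (j ^ 2) ^ 2 / j ^ 3 := by field_simp
    _ ≤ ∑ p ∈ S, 1 ^ 2 / ((p.2 : ℝ) - p.1) := htitu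
    _ ≤ ∑ p ∈ range j ×ˢ Ico j n, ((p.2 : ℝ) - p.1)⁻¹ := by
        simp only [one_pow, one_div]
        refine sum_le_sum_of_subset_of_nonneg (product_subset_product_right
          (Ico_subset_Ico_right h)) fun p hp _ ↦ ?_
        simp only [mem_product, mem_range, mem_Ico] at hp
        exact (inv_sub_natCast_pos (by omega)).le
    _ = weylWeight n j := by rw [weylWeight, sum_product]

theorem mul_log_sub_log_le_weylWeight {n j : ℕ} (h : j < n) :
    j * (log ((n : ℝ) - 1) - log j) ≤ weylWeight n j := by
  have hconst : (j : ℝ) * (log ((n : ℝ) - 1) - log j) =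
      ∑ _a ∈ range j, (log ((n : ℝ) - 1) - log j) := by
    rw [sum_const, card_range, nsmul_eq_mul]
  rw [hconst, weylWeight]
  refine sum_le_sum fun a ha ↦ ?_
  have ha : a < j := mem_range.1 ha
  have hajR : (a : ℝ) + 1 ≤ j := by exact_mod_cast ha
  have hjnR : (j : ℝ) + 1 ≤ n := by exact_mod_cast h
  calc log ((n : ℝ) - 1) - log j ≤ log (n - a) - log (j - a) := by
        rw [sub_le_sub_iff, ← log_mul (by linarith) (by linarith),
          ← log_mul (by linarith) (by linarith)]
        refine log_le_log (mul_pos (by linarith) (by linarith)) ?_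
        nlinarith [mul_nonneg (a.cast_nonneg : (0 : ℝ) ≤ a) (by linarith : (0 : ℝ) ≤ n - 1 - j)]
    _ ≤ ∑ b ∈ Ico j n, ((b : ℝ) - a)⁻¹ :=
        log_sub_log_le_sum_inv (by linarith) h.le

theorem prod_rpow_weylWeight_le_prod_mean (n : ℕ) {z : ℕ → ℝ} (hz : ∀ k, 0 ≤ z k) :
    ∏ k ∈ range (n - 1), z k ^ weylWeight n (k + 1) ≤
      ∏ p ∈ (range n ×ˢ range n).filter (fun p ↦ p.1 < p.2),
        (∑ k ∈ Ico p.1 p.2, z k) / ((p.2 : ℝ) - p.1) := by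
  calc ∏ k ∈ range (n - 1), z k ^ weylWeight n (k + 1)
      = ∏ k ∈ range (n - 1), ∏ p ∈ range (k + 1) ×ˢ Ico (k + 1) n,
          z k ^ ((p.2 : ℝ) - p.1)⁻¹ := by
        refine prod_congr rfl fun k _ ↦ ?_
        rw [weylWeight, ← sum_product', rpow_sum_of_nonneg (hz k) fun p hp ↦ ?_]
        simp only [mem_product, mem_range, mem_Ico] at hp
        exact (inv_sub_natCast_pos (by omega)).le
    _ = ∏ p ∈ (range n ×ˢ range n).filter (fun p ↦ p.1 < p.2),
          ∏ k ∈ Ico p.1 p.2, z k ^ ((p.2 : ℝ) - p.1)⁻¹ :=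
        (prod_comm' fun k p ↦ by
          simp only [mem_product, mem_range, mem_Ico, mem_filter]; omega).symm
    _ ≤ _ := prod_le_prod (fun p _ ↦ prod_nonneg fun k _ ↦ rpow_nonneg (hz k) _) fun p hp ↦ by
        have hlt := (mem_filter.1 hp).2
        have hcard : (#(Ico p.1 p.2) : ℝ) = (p.2 : ℝ) - p.1 := by
          rw [Nat.card_Ico, Nat.cast_sub hlt.le]
        rw [← hcard]
        exact prod_rpow_inv_card_le_sum_div_card (nonempty_Ico.2 hlt) fun k _ ↦ hz k

theorem sum_Ico_one_add_xCoord (lam : YoungDiagram) {i j : ℕ} (h : i ≤ j) :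
    ∑ k ∈ Ico i j, (1 + (xCoord lam (k + 1) : ℝ)) =
      (lam.rowLen i : ℝ) - lam.rowLen j + j - i := by
  have hx : ∀ k, (xCoord lam (k + 1) : ℝ) = -((lam.rowLen (k + 1) : ℝ) - lam.rowLen k) := by
    intro k
    rw [xCoord, Nat.add_sub_cancel, Nat.cast_sub (lam.rowLen_anti _ _ k.le_succ), neg_sub]
  simp only [hx, sum_add_distrib, sum_neg_distrib, sum_Ico_sub (fun k ↦ (lam.rowLen k : ℝ)) h,
    sum_const, Nat.card_Ico, nsmul_one, Nat.cast_sub h]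
  ring

theorem weylDim_eq_prod_mean (n : ℕ) (lam : YoungDiagram) :
    weylDim n lam = ∏ p ∈ (range n ×ˢ range n).filter (fun p ↦ p.1 < p.2),
      (∑ k ∈ Ico p.1 p.2, (1 + (xCoord lam (k + 1) : ℝ))) / ((p.2 : ℝ) - p.1) :=
  prod_congr rfl fun p hp ↦ by rw [sum_Ico_one_add_xCoord lam (mem_filter.1 hp).2.le]

theorem prod_one_add_xCoord_rpow_le_weylDim (n : ℕ) (lam : YoungDiagram) :
    ∏ i ∈ Icc 1 (n - 1), (1 + (xCoord lam i : ℝ)) ^ weylWeight n i ≤ weylDim n lam := by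
  rw [weylDim_eq_prod_mean, show Icc 1 (n - 1) = Ico 1 n by ext; simp; omega,
    prod_Ico_eq_prod_range]
  simpa only [add_comm 1] using
    prod_rpow_weylWeight_le_prod_mean n fun k ↦ (by positivity : 0 ≤ 1 + (xCoord lam (k + 1) : ℝ))

theorem weylDim_lower_bound_general (n : ℕ) :
    ∃ v : ℕ → ℝ,
      (∀ j, 1 ≤ j → j ≤ n - 1 → 0 < v j) ∧
      (∀ j, 1 ≤ j → j ≤ n - 1 → v j = v (n - j)) ∧
      (∀ j, 1 ≤ j → 2 * j ≤ n →
        (j : ℝ) * max 1 (Real.log ((n : ℝ) - 1) - Real.log (j : ℝ)) ≤ v j) ∧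
      ∀ lam : YoungDiagram, lam.colLen 0 < n →
        ∏ i ∈ Finset.Icc 1 (n - 1), (1 + (xCoord lam i : ℝ)) ^ (v i) ≤ weylDim n lam := by
  refine ⟨weylWeight n, fun j h1 h2 ↦ weylWeight_pos h1 (by omega),
    fun j _ h2 ↦ (weylWeight_symm (by omega)).symm, fun j h1 h2 ↦ ?_,
    fun lam _ ↦ prod_one_add_xCoord_rpow_le_weylDim n lam⟩
  rw [mul_max_of_nonneg _ _ j.cast_nonneg, mul_one]
  exact max_le (le_weylWeight h2) (mul_log_sub_log_le_weylWeight (by omega))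

/-- For `n ≥ 2` there exist positive reals `v_1,…,v_{n-1}` with `v_j = v_{n-j}` and
`v_j ≥ j·max(1, log(n-1) - log j)` for `1 ≤ j ≤ n/2`, such that for every Young diagram
`λ` with `ℓ(λ) < n`, `dim W_n^λ ≥ ∏_{i=1}^{n-1} (1 + x_i(λ))^{v_i}`. -/
theorem weylDim_lower_bound (n : ℕ) (hn : 2 ≤ n) :
    ∃ v : ℕ → ℝ,
      (∀ j, 1 ≤ j → j ≤ n - 1 → 0 < v j) ∧
      (∀ j, 1 ≤ j → j ≤ n - 1 → v j = v (n - j)) ∧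
      (∀ j, 1 ≤ j → 2 * j ≤ n →
        (j : ℝ) * max 1 (Real.log ((n : ℝ) - 1) - Real.log (j : ℝ)) ≤ v j) ∧
      ∀ lam : YoungDiagram, lam.colLen 0 < n →
        ∏ i ∈ Finset.Icc 1 (n - 1), (1 + (xCoord lam i : ℝ)) ^ (v i) ≤ weylDim n lam :=
  weylDim_lower_bound_general n
end

section
/- Let G be a compact group, g ≥ 1, and (ρ, W) an irreducible unitary representation of G. Then, with μ the Haar probability measure on G, ∫_{G^{2g}} tr(ρ([x_1,y_1]⋯[x_g,y_g])) dμ(x_1)dμ(y_1)⋯dμ(x_g)dμ(y_g) = (dim W)^{1−2g}. -/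
open MeasureTheory
open scoped commutatorElement

/-- A (continuous, unitary) matrix representation `ρ` is irreducible if the only invariant
subspaces are `⊥` and `⊤`. -/
def MatIrreducible {G : Type*} [Group G] {d : ℕ}
    (ρ : G →* Matrix.unitaryGroup (Fin d) ℂ) : Prop :=
  ∀ U : Submodule ℂ (Fin d → ℂ),
    (∀ x : G, U.map (Matrix.mulVecLin (ρ x : Matrix (Fin d) (Fin d) ℂ)) ≤ U) →
      U = ⊥ ∨ U = ⊤

set_option maxHeartbeats 1600000 in
/-- Frobenius' formula and its extension to higher genus: for a compact group `G` with
Haar probability measure `μ`, an irreducible unitary representation `(ρ, W)` with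
`dim W = d`, and `g ≥ 1`,
`∫_{G^{2g}} tr(ρ([x_1,y_1]⋯[x_g,y_g])) dμ^{2g} = (dim W)^{1-2g}`. -/
theorem integral_char_commutator_product
    {G : Type*} [Group G] [TopologicalSpace G] [IsTopologicalGroup G] [CompactSpace G]
    [MeasurableSpace G] [BorelSpace G]
    (μ : Measure G) [μ.IsHaarMeasure] [IsProbabilityMeasure μ]
    (g : ℕ) (hg : 1 ≤ g) (d : ℕ) (hd : 0 < d)
    (ρ : G →* Matrix.unitaryGroup (Fin d) ℂ)
    (hcont : Continuous fun x : G => (ρ x : Matrix (Fin d) (Fin d) ℂ))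
    (hirr : MatIrreducible ρ) :
    ∫ x : Fin g → G × G,
        Matrix.trace
          ((ρ (((List.finRange g).map fun i => ⁅(x i).1, (x i).2⁆).prod) :
            Matrix (Fin d) (Fin d) ℂ))
        ∂(Measure.pi fun _ => μ.prod μ) =
      (d : ℂ) ^ (1 - 2 * (g : ℤ)) := by
  classical
  have hd0 : (d : ℂ) ≠ 0 := Nat.cast_ne_zero.mpr hd.ne'
  set P : G → Matrix (Fin d) (Fin d) ℂ := fun x => (ρ x : Matrix (Fin d) (Fin d) ℂ) with hPdef
  have hPmul : ∀ x y : G, P (x * y) = P x * P y := by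
    intro x y; simp [hPdef, map_mul]
  have hPone : P 1 = 1 := by simp [hPdef]
  have hPcont : Continuous P := hcont
  have hint : ∀ f : G → ℂ, Continuous f → Integrable f μ := fun f hf =>
    hf.integrable_of_hasCompactSupport (HasCompactSupport.of_compactSpace f)
  have hPe : ∀ i j : Fin d, Continuous fun x => P x i j := fun i j => hPcont.matrix_elem i j
  have hPie : ∀ i j : Fin d, Continuous fun x => P (x⁻¹) i j :=
    fun i j => (hPcont.comp continuous_inv).matrix_elem i j
  -- Schur's lemma
  have schur : ∀ T : Matrix (Fin d) (Fin d) ℂ, (∀ y : G, P y * T = T * P y) →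
      T = (Matrix.trace T / d) • 1 := by
    intro T hT
    haveI : Nonempty (Fin d) := ⟨⟨0, hd⟩⟩
    obtain ⟨c, hc⟩ := Module.End.exists_eigenvalue (Matrix.mulVecLin T)
    have hinv : ∀ x : G,
        (Module.End.eigenspace (Matrix.mulVecLin T) c).map
          (Matrix.mulVecLin (P x)) ≤
        Module.End.eigenspace (Matrix.mulVecLin T) c := by
      intro x
      rintro _ ⟨v, hv, rfl⟩
      rw [SetLike.mem_coe, Module.End.mem_eigenspace_iff] at hv
      rw [Module.End.mem_eigenspace_iff]
      have hv' : T.mulVec v = c • v := hv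
      show T.mulVec ((P x).mulVec v) = _
      rw [Matrix.mulVec_mulVec, ← hT x, ← Matrix.mulVec_mulVec, hv', Matrix.mulVec_smul]
      rfl
    have htop : Module.End.eigenspace (Matrix.mulVecLin T) c = ⊤ := by
      rcases hirr _ hinv with h | h
      · exact absurd h hc
      · exact h
    have hvec : ∀ v : Fin d → ℂ, T.mulVec v = c • v := by
      intro v
      have hv : v ∈ Module.End.eigenspace (Matrix.mulVecLin T) c := htop ▸ Submodule.mem_top
      exact Module.End.mem_eigenspace_iff.mp hv
    have hTc : T = c • (1 : Matrix (Fin d) (Fin d) ℂ) := by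
      ext i j
      have h := congrFun (hvec (Pi.single j 1)) i
      rw [Matrix.mulVec_single] at h
      simpa [Matrix.one_apply, Pi.single_apply, mul_comm] using h
    rw [hTc]
    congr 1
    rw [Matrix.trace_smul, Matrix.trace_one]
    field_simp
    simp
  -- averaging lemma
  have avg : ∀ (A : Matrix (Fin d) (Fin d) ℂ) (k l : Fin d),
      ∫ x, (P x * A * P (x⁻¹)) k l ∂μ =
        (Matrix.trace A / d) * (1 : Matrix (Fin d) (Fin d) ℂ) k l := by
    intro A k l
    have hq : Continuous fun x => P x * A * P (x⁻¹) :=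
      (hPcont.matrix_mul continuous_const).matrix_mul (hPcont.comp continuous_inv)
    have hqe : ∀ i j, Continuous fun x => (P x * A * P (x⁻¹)) i j := fun i j => hq.matrix_elem i j
    set T : Matrix (Fin d) (Fin d) ℂ :=
      Matrix.of fun i j => ∫ x, (P x * A * P (x⁻¹)) i j ∂μ with hTdef
    have hcomm : ∀ y : G, P y * T = T * P y := by
      intro y
      ext i j
      rw [Matrix.mul_apply, Matrix.mul_apply]
      have h1 : ∀ m : Fin d, P y i m * T m j = ∫ x, P y i m * (P x * A * P (x⁻¹)) m j ∂μ := by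
        intro m
        rw [hTdef]
        simp only [Matrix.of_apply]
        rw [integral_const_mul]
      have h2 : ∀ m : Fin d, T i m * P y m j = ∫ x, (P x * A * P (x⁻¹)) i m * P y m j ∂μ := by
        intro m
        rw [hTdef]
        simp only [Matrix.of_apply]
        rw [integral_mul_const]
      simp only [h1, h2]
      rw [← integral_finset_sum _ (fun m _ => hint _ (continuous_const.fun_mul (hqe m j))),
          ← integral_finset_sum _ (fun m _ => hint _ ((hqe i m).fun_mul continuous_const))]
      have lhs_eq : ∀ x : G, ∑ m, P y i m * (P x * A * P (x⁻¹)) m j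
          = ((P (y * x) * A * P ((y * x)⁻¹) * P y)) i j := by
        intro x
        have hM : P y * (P x * A * P (x⁻¹)) = P (y * x) * A * P ((y * x)⁻¹) * P y := by
          rw [hPmul, mul_inv_rev, hPmul]
          have h1' : P (x⁻¹) * P (y⁻¹) * P y = P (x⁻¹) := by
            rw [← hPmul, ← hPmul]; simp [hPone]
          calc P y * (P x * A * P (x⁻¹)) = P y * P x * A * (P (x⁻¹) * P (y⁻¹) * P y) := by
                rw [h1']; noncomm_ring
            _ = P y * P x * A * (P (x⁻¹) * P (y⁻¹)) * P y := by noncomm_ring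
        rw [← Matrix.mul_apply, hM]
      have rhs_eq : ∀ x : G, ∑ m, (P x * A * P (x⁻¹)) i m * P y m j
          = ((P x * A * P (x⁻¹) * P y)) i j := by
        intro x
        rw [← Matrix.mul_apply]
      simp only [lhs_eq, rhs_eq]
      exact integral_mul_left_eq_self (fun x => (P x * A * P (x⁻¹) * P y) i j) y
    have hTs := schur T hcomm
    have htr : Matrix.trace T = Matrix.trace A := by
      have hdiag : Matrix.trace T = ∑ i, ∫ x, (P x * A * P (x⁻¹)) i i ∂μ := rfl
      rw [hdiag, ← integral_finset_sum _ (fun i _ => hint _ (hqe i i))]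
      have hfix : ∀ x : G, ∑ i, (P x * A * P (x⁻¹)) i i = Matrix.trace A := by
        intro x
        have h0 : ∑ i, (P x * A * P (x⁻¹)) i i = Matrix.trace (P x * A * P (x⁻¹)) := rfl
        rw [h0, Matrix.trace_mul_cycle, ← hPmul]
        simp [hPone]
      simp only [hfix]
      simp
    have hent : T k l = ((Matrix.trace T / d) • (1 : Matrix (Fin d) (Fin d) ℂ)) k l := by
      rw [← hTs]
    have hTkl : T k l = ∫ x, (P x * A * P (x⁻¹)) k l ∂μ := rfl
    rw [← hTkl, hent, htr, Matrix.smul_apply, smul_eq_mul]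
  -- Schur orthogonality
  have orth : ∀ i j k l : Fin d, ∫ x, P x k i * P (x⁻¹) j l ∂μ =
      (if i = j then (d : ℂ)⁻¹ else 0) * (if k = l then 1 else 0) := by
    intro i j k l
    have h := avg (Matrix.single i j (1 : ℂ)) k l
    have hent : ∀ x : G, (P x * Matrix.single i j (1 : ℂ) * P (x⁻¹)) k l
        = P x k i * P (x⁻¹) j l := by
      intro x
      rw [Matrix.mul_apply]
      have h1 : ∀ m : Fin d,
          (P x * Matrix.single i j (1 : ℂ)) k m = if j = m then P x k i else 0 := by
        intro m
        rw [Matrix.mul_apply]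
        simp [Matrix.single, ite_and, Finset.sum_ite_eq]
      simp only [h1]
      simp [ite_mul, Finset.sum_ite_eq]
    rw [funext hent] at h
    rw [h, Matrix.one_apply]
    by_cases hij : i = j
    · subst hij
      rw [Matrix.trace_single_eq_same]
      simp [div_eq_mul_inv]
    · rw [Matrix.trace_single_eq_of_ne i j (1 : ℂ) hij]
      simp [hij]
  -- the integral of a single commutator entry
  have commInt : ∀ a b : Fin d,
      Integrable (fun p : G × G => P ⁅p.1, p.2⁆ a b) (μ.prod μ) ∧
      ∫ p : G × G, P ⁅p.1, p.2⁆ a b ∂(μ.prod μ) = if a = b then ((d : ℂ) ^ 2)⁻¹ else 0 := by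
    intro a b
    have expand : ∀ p : G × G, P ⁅p.1, p.2⁆ a b =
        ∑ m, ∑ l, ∑ k, (P p.1 a k * P (p.1⁻¹) l m) * (P p.2 k l * P (p.2⁻¹) m b) := by
      rintro ⟨x, y⟩
      have hc : P ⁅x, y⁆ = P x * P y * P (x⁻¹) * P (y⁻¹) := by
        rw [commutatorElement_def, hPmul, hPmul, hPmul]
      rw [hc]
      simp only [Matrix.mul_apply, Finset.sum_mul]
      refine Finset.sum_congr rfl fun m _ => Finset.sum_congr rfl fun l _ =>
        Finset.sum_congr rfl fun k _ => by ring
    have hterm : ∀ m l k : Fin d, Integrable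
        (fun p : G × G => (P p.1 a k * P (p.1⁻¹) l m) * (P p.2 k l * P (p.2⁻¹) m b))
        (μ.prod μ) :=
      fun m l k => (hint _ ((hPe a k).fun_mul (hPie l m))).mul_prod (hint _ ((hPe k l).fun_mul (hPie m b)))
    constructor
    · rw [funext expand]
      exact integrable_finset_sum _ fun m _ => integrable_finset_sum _ fun l _ =>
        integrable_finset_sum _ fun k _ => hterm m l k
    · rw [funext expand]
      rw [integral_finset_sum _ fun m _ => integrable_finset_sum _ fun l _ =>
        integrable_finset_sum _ fun k _ => hterm m l k]
      have h1 : ∀ m : Fin d, ∫ p : G × G, ∑ l, ∑ k,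
          (P p.1 a k * P (p.1⁻¹) l m) * (P p.2 k l * P (p.2⁻¹) m b) ∂(μ.prod μ)
          = ∑ l, ∑ k, ∫ p : G × G,
          (P p.1 a k * P (p.1⁻¹) l m) * (P p.2 k l * P (p.2⁻¹) m b) ∂(μ.prod μ) := by
        intro m
        rw [integral_finset_sum _ fun l _ => integrable_finset_sum _ fun k _ => hterm m l k]
        exact Finset.sum_congr rfl fun l _ =>
          integral_finset_sum _ fun k _ => hterm m l k
      simp only [h1]
      have h2 : ∀ m l k : Fin d, ∫ p : G × G,
          (P p.1 a k * P (p.1⁻¹) l m) * (P p.2 k l * P (p.2⁻¹) m b) ∂(μ.prod μ)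
          = ((if k = l then (d : ℂ)⁻¹ else 0) * (if a = m then 1 else 0)) *
            ((if l = m then (d : ℂ)⁻¹ else 0) * (if k = b then 1 else 0)) := by
        intro m l k
        rw [integral_prod_mul (fun x => P x a k * P (x⁻¹) l m) (fun y => P y k l * P (y⁻¹) m b)]
        rw [orth k l a m, orth l m k b]
      simp only [h2]
      simp only [ite_mul, mul_ite, mul_one, mul_zero, zero_mul, one_mul]
      simp [Finset.sum_ite_eq, Finset.sum_ite_eq']
      by_cases hab : a = b
      · subst hab; simp [sq]
      · simp [hab, Ne.symm hab]
  -- the key induction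
  have key : ∀ (n : ℕ) (a b : Fin d),
      Integrable (fun x : Fin n → G × G =>
        ((List.finRange n).map (fun i => P ⁅(x i).1, (x i).2⁆)).prod a b)
        (Measure.pi fun _ => μ.prod μ) ∧
      ∫ x : Fin n → G × G,
          ((List.finRange n).map (fun i => P ⁅(x i).1, (x i).2⁆)).prod a b
          ∂(Measure.pi fun _ => μ.prod μ) = if a = b then (((d : ℂ) ^ 2)⁻¹) ^ n else 0 := by
    intro n
    induction n with
    | zero =>
      intro a b
      constructor
      · simpa [List.finRange] using integrable_const ((1 : Matrix (Fin d) (Fin d) ℂ) a b)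
      · simp [List.finRange, Matrix.one_apply]
    | succ n ih =>
      intro a b
      have mp := measurePreserving_piFinSuccAbove (fun _ : Fin (n + 1) => μ.prod μ) 0
      have hcomp : ∀ x : Fin (n + 1) → G × G,
          ((List.finRange (n + 1)).map (fun i => P ⁅(x i).1, (x i).2⁆)).prod a b =
          (fun z : (G × G) × (Fin n → G × G) => ∑ k, P ⁅z.1.1, z.1.2⁆ a k *
            ((List.finRange n).map (fun i => P ⁅(z.2 i).1, (z.2 i).2⁆)).prod k b)
            ((MeasurableEquiv.piFinSuccAbove (fun _ : Fin (n + 1) => G × G) 0) x) := by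
        intro x
        rw [List.finRange_succ, List.map_cons, List.prod_cons, List.map_map]
        rw [Matrix.mul_apply]
        simp only [MeasurableEquiv.piFinSuccAbove_apply, Fin.insertNthEquiv_zero,
          Fin.consEquiv_symm_apply, Function.comp_def, Fin.removeNth, Fin.succAbove_zero,
          Fin.tail]
      have hgint : Integrable (fun z : (G × G) × (Fin n → G × G) =>
          ∑ k, P ⁅z.1.1, z.1.2⁆ a k *
            ((List.finRange n).map (fun i => P ⁅(z.2 i).1, (z.2 i).2⁆)).prod k b)
          ((μ.prod μ).prod (Measure.pi fun _ : Fin n => μ.prod μ)) :=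
        integrable_finset_sum _ fun k _ => (commInt a k).1.mul_prod (ih k b).1
      constructor
      · rw [funext hcomp]
        exact (MeasurePreserving.integrable_comp_emb mp
          (MeasurableEquiv.piFinSuccAbove (fun _ : Fin (n + 1) => G × G) 0).measurableEmbedding).mpr
          hgint
      · rw [funext hcomp]
        rw [MeasurePreserving.integral_comp mp
          (MeasurableEquiv.piFinSuccAbove (fun _ : Fin (n + 1) => G × G) 0).measurableEmbedding
          (fun z : (G × G) × (Fin n → G × G) => ∑ k, P ⁅z.1.1, z.1.2⁆ a k *
            ((List.finRange n).map (fun i => P ⁅(z.2 i).1, (z.2 i).2⁆)).prod k b)]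
        rw [integral_finset_sum _ fun k _ => (commInt a k).1.mul_prod (ih k b).1]
        have hterm : ∀ k : Fin d,
            ∫ z : (G × G) × (Fin n → G × G), P ⁅z.1.1, z.1.2⁆ a k *
              ((List.finRange n).map (fun i => P ⁅(z.2 i).1, (z.2 i).2⁆)).prod k b
              ∂((μ.prod μ).prod (Measure.pi fun _ => μ.prod μ))
            = (if a = k then ((d : ℂ) ^ 2)⁻¹ else 0) *
              (if k = b then (((d : ℂ) ^ 2)⁻¹) ^ n else 0) := by
          intro k
          rw [integral_prod_mul (fun p : G × G => P ⁅p.1, p.2⁆ a k)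
            (fun y : Fin n → G × G =>
              ((List.finRange n).map (fun i => P ⁅(y i).1, (y i).2⁆)).prod k b)]
          rw [(commInt a k).2, (ih k b).2]
        simp only [hterm]
        simp only [ite_mul, mul_ite, mul_zero, zero_mul]
        simp [Finset.sum_ite_eq, pow_succ]
        by_cases hab : a = b
        · subst hab; simp [pow_succ]; ring
        · simp [hab]
  -- assembling
  have hmain : ∀ x : Fin g → G × G,
      Matrix.trace
        ((ρ (((List.finRange g).map fun i => ⁅(x i).1, (x i).2⁆).prod) :
          Matrix (Fin d) (Fin d) ℂ))
      = ∑ a, ((List.finRange g).map (fun i => P ⁅(x i).1, (x i).2⁆)).prod a a := by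
    intro x
    have h1 : (ρ (((List.finRange g).map fun i => ⁅(x i).1, (x i).2⁆).prod) :
        Matrix (Fin d) (Fin d) ℂ)
        = ((List.finRange g).map (fun i => P ⁅(x i).1, (x i).2⁆)).prod := by
      rw [map_list_prod]
      rw [SubmonoidClass.coe_list_prod]
      rw [List.map_map, List.map_map]
      rfl
    rw [h1]
    rfl
  rw [funext hmain]
  rw [integral_finset_sum _ fun a _ => (key g a a).1]
  have hval : ∀ a : Fin d,
      (∫ x : Fin g → G × G,
        ((List.finRange g).map (fun i => P ⁅(x i).1, (x i).2⁆)).prod a a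
        ∂(Measure.pi fun _ => μ.prod μ)) = (((d : ℂ) ^ 2)⁻¹) ^ g := by
    intro a
    rw [(key g a a).2, if_pos rfl]
  rw [Finset.sum_congr rfl fun a _ => hval a]
  rw [Finset.sum_const, Finset.card_univ, Fintype.card_fin, nsmul_eq_mul]
  have harr : ((d : ℂ) ^ 2)⁻¹ ^ g = ((d : ℂ) ^ (2 * g : ℕ))⁻¹ := by
    rw [inv_pow, ← pow_mul]
  rw [harr]
  rw [show (1 - 2 * (g : ℤ)) = (1 : ℤ) - (2 * g : ℕ) by push_cast; ring]
  rw [zpow_sub₀ hd0, zpow_one, zpow_natCast, div_eq_mul_inv]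
end
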